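/- arXiv:2307.02913 — 3 statements merged into one kernel-verified Lean document; each statement's English description precedes it below -/
import Mathlib

section
/- Let V, D : ℝ → ℝ be smooth with D > 0, let kT > 0, and let y : ℝ → ℝ be a smooth strictly increasing bijection with smooth inverse x(·). Define V̂(y) = V(x(y)) + kT · ln(y'(x(y))) and D̂(y) = D(x(y)) · (y'(x(y)))². Then for all x, the identity (-D(x)·V'(x) + kT·D'(x))·y'(x) + kT·D(x)·y''(x) = -D̂(y(x))·V̂'(y(x)) + kT·D̂'(y(x)) holds. -/
/-- Drift-transformation identity for a general coordinate change applied to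
one-dimensional Brownian dynamics (Theorem A.1). -/
theorem brownian_dynamics_coordinate_transform_drift
    (V D : ℝ → ℝ) (hV : ContDiff ℝ (⊤ : ℕ∞) V) (hD : ContDiff ℝ (⊤ : ℕ∞) D) (hDpos : ∀ x, 0 < D x)
    (kT : ℝ) (hkT : 0 < kT)
    (y x : ℝ → ℝ) (hy : ContDiff ℝ (⊤ : ℕ∞) y) (hymono : StrictMono y)
    (hybij : Function.Bijective y)
    (hx : ContDiff ℝ (⊤ : ℕ∞) x) (hxy : ∀ t, x (y t) = t) (hyx : ∀ s, y (x s) = s)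
    (Vhat Dhat : ℝ → ℝ)
    (hVhat : ∀ u, Vhat u = V (x u) + kT * Real.log (deriv y (x u)))
    (hDhat : ∀ u, Dhat u = D (x u) * (deriv y (x u)) ^ 2) :
    ∀ t, (-D t * deriv V t + kT * deriv D t) * deriv y t
        + kT * D t * deriv (deriv y) t
      = -Dhat (y t) * deriv Vhat (y t) + kT * deriv Dhat (y t) := by
  intro t
  have hxt : x (y t) = t := hxy t
  have hyd : ∀ s, HasDerivAt y (deriv y s) s := fun s =>
    (hy.differentiable (by simp) s).hasDerivAt
  have hxd : ∀ s, HasDerivAt x (deriv x s) s := fun s =>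
    (hx.differentiable (by simp) s).hasDerivAt
  have hy'cd : ContDiff ℝ (⊤ : ℕ∞) (deriv y) := (contDiff_infty_iff_deriv.mp (hy.of_le (by simp))).2
  have hy'd : ∀ s, HasDerivAt (deriv y) (deriv (deriv y) s) s := fun s =>
    (hy'cd.differentiable (by simp) s).hasDerivAt
  -- chain rule on x ∘ y = id
  have hchain : deriv x (y t) * deriv y t = 1 := by
    have h1 : HasDerivAt (fun s => x (y s)) (deriv x (y t) * deriv y t) t :=
      (hxd (y t)).comp t (hyd t)
    have h2 : HasDerivAt (fun s => x (y s)) 1 t := by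
      have : (fun s => x (y s)) = id := funext hxy
      rw [this]; simpa using hasDerivAt_id t
    exact h1.unique h2
  have hy0 : deriv y t ≠ 0 := by
    intro h; rw [h, mul_zero] at hchain; exact zero_ne_one hchain
  have hxa : deriv x (y t) = (deriv y t)⁻¹ := by
    field_simp at hchain ⊢; linarith [hchain]
  -- derivative of V ∘ x at y t
  have hVc : HasDerivAt (fun u => V (x u)) (deriv V t * deriv x (y t)) (y t) := by
    have := ((hV.differentiable (by simp) (x (y t))).hasDerivAt).comp (y t) (hxd (y t))
    rwa [hxt] at this
  -- derivative of deriv y ∘ x at y t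
  have hy'c : HasDerivAt (fun u => deriv y (x u)) (deriv (deriv y) t * deriv x (y t)) (y t) := by
    have := (hy'd (x (y t))).comp (y t) (hxd (y t))
    rwa [hxt] at this
  have hy'ne : (fun u => deriv y (x u)) (y t) ≠ 0 := by simpa [hxt] using hy0
  have hlog : HasDerivAt (fun u => Real.log (deriv y (x u)))
      ((deriv (deriv y) t * deriv x (y t)) / deriv y t) (y t) := by
    have := hy'c.log hy'ne
    simpa [hxt] using this
  have hDc : HasDerivAt (fun u => D (x u)) (deriv D t * deriv x (y t)) (y t) := by
    have := ((hD.differentiable (by simp) (x (y t))).hasDerivAt).comp (y t) (hxd (y t))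
    rwa [hxt] at this
  have hsq : HasDerivAt (fun u => (deriv y (x u)) ^ 2)
      (2 * deriv y t * (deriv (deriv y) t * deriv x (y t))) (y t) := by
    have := hy'c.pow 2
    simpa [hxt, Pi.pow_def] using this
  have hVhatD : HasDerivAt Vhat
      (deriv V t * deriv x (y t) + kT * ((deriv (deriv y) t * deriv x (y t)) / deriv y t)) (y t) := by
    have hfe : Vhat = fun u => V (x u) + kT * Real.log (deriv y (x u)) := funext hVhat
    rw [hfe]
    exact hVc.add (hlog.const_mul kT)
  have hDhatD : HasDerivAt Dhat
      (deriv D t * deriv x (y t) * (deriv y t) ^ 2 + D t * (2 * deriv y t * (deriv (deriv y) t * deriv x (y t))))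
      (y t) := by
    have hfe : Dhat = fun u => D (x u) * (deriv y (x u)) ^ 2 := funext hDhat
    rw [hfe]
    have := hDc.mul hsq
    simpa [hxt, Pi.mul_def] using this
  rw [hVhatD.deriv, hDhatD.deriv, hDhat (y t), hxt, hxa]
  field_simp
  ring
end

section
/- Let n ∈ ℕ, kT > 0, let V : ℝⁿ → ℝ be smooth, and for each i let D_i : ℝ → ℝ be smooth and positive. Suppose each φ_i(x) = ∫_{x₀}^x D_i(z)^{-1}dz is a bijection of ℝ with inverse φ_i^{-1}, and define φ^{-1} : ℝⁿ → ℝⁿ componentwise. Define V̂(Y) = V(φ^{-1}(Y)) - kT·∑_{k=1}^n ln D_k(φ_k^{-1}(Y_k)). Then for each i and all Y, with X = φ^{-1}(Y): ∂V̂/∂Y_i (Y) = D_i(X_i)·∂V/∂X_i (X) - kT·D_i'(X_i). -/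
open intervalIntegral

/-- Drift identity for the componentwise Lamperti transform of multivariate Brownian
dynamics with diagonal diffusion (core of Theorem C.5). -/
theorem multivariate_lamperti_drift_identity
    (n : ℕ) (kT : ℝ) (hkT : 0 < kT)
    (V : (Fin n → ℝ) → ℝ) (hV : ContDiff ℝ (⊤ : ℕ∞) V)
    (D : Fin n → ℝ → ℝ) (hD : ∀ i, ContDiff ℝ (⊤ : ℕ∞) (D i)) (hDpos : ∀ i x, 0 < D i x)
    (x₀ : ℝ)
    (φ : Fin n → ℝ → ℝ) (hφ : ∀ i x, φ i x = ∫ z in x₀..x, (D i z)⁻¹)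
    (hφbij : ∀ i, Function.Bijective (φ i))
    (ψ : Fin n → ℝ → ℝ) (hψφ : ∀ i x, ψ i (φ i x) = x) (hφψ : ∀ i u, φ i (ψ i u) = u)
    (Vhat : (Fin n → ℝ) → ℝ)
    (hVhat : ∀ Y, Vhat Y = V (fun i => ψ i (Y i))
        - kT * ∑ k, Real.log (D k (ψ k (Y k)))) :
    ∀ (Y : Fin n → ℝ) (i : Fin n),
      fderiv ℝ Vhat Y (Pi.single i 1)
        = D i (ψ i (Y i)) * fderiv ℝ V (fun j => ψ j (Y j)) (Pi.single i 1)
          - kT * deriv (D i) (ψ i (Y i)) := by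
  -- derivative of φ j (FTC)
  have hφderiv : ∀ (j : Fin n) (x : ℝ), HasDerivAt (φ j) (D j x)⁻¹ x := by
    intro j x
    have hc : Continuous fun z => (D j z)⁻¹ :=
      ((hD j).continuous).inv₀ (fun z => (hDpos j z).ne')
    have h := intervalIntegral.integral_hasDerivAt_right
      (hc.intervalIntegrable x₀ x) (hc.stronglyMeasurableAtFilter _ _) hc.continuousAt
    have hfe : φ j = fun u => ∫ z in x₀..u, (D j z)⁻¹ := funext (hφ j)
    rw [hfe]; exact h
  have hmono : ∀ j, StrictMono (φ j) := by
    intro j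
    apply strictMono_of_deriv_pos
    intro x
    rw [(hφderiv j x).deriv]
    exact inv_pos.2 (hDpos j x)
  -- continuity of ψ j
  have hψcont : ∀ j, Continuous (ψ j) := by
    intro j
    have hsurj : Function.Surjective (φ j) := (hφbij j).2
    let e : ℝ ≃o ℝ := (hmono j).orderIsoOfSurjective _ hsurj
    have hec : ∀ x, e x = φ j x := fun x => rfl
    have he : ψ j = e.symm := by
      funext u
      apply (hφbij j).1
      rw [hφψ]
      have := e.apply_symm_apply u
      rw [hec] at this
      exact this.symm
    rw [he]
    exact e.symm.continuous
  -- derivative of ψ j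
  have hψderiv : ∀ (j : Fin n) (u : ℝ), HasDerivAt (ψ j) (D j (ψ j u)) u := by
    intro j u
    have h1 : HasDerivAt (φ j) (D j (ψ j u))⁻¹ (ψ j u) := hφderiv j _
    have h2 : (D j (ψ j u))⁻¹ ≠ 0 := inv_ne_zero (hDpos j _).ne'
    have h := HasDerivAt.of_local_left_inverse ((hψcont j).continuousAt) h1 h2
      (Filter.Eventually.of_forall (hφψ j))
    simpa using h
  intro Y i
  set X : Fin n → ℝ := fun j => ψ j (Y j) with hX
  -- the componentwise map F
  set L : (Fin n → ℝ) →L[ℝ] (Fin n → ℝ) :=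
    ContinuousLinearMap.pi (fun j => D j (X j) •
      (ContinuousLinearMap.proj j : (Fin n → ℝ) →L[ℝ] ℝ)) with hL
  have hF : HasFDerivAt (fun Z : Fin n → ℝ => fun j => ψ j (Z j)) L Y := by
    rw [hL]
    apply hasFDerivAt_pi.2
    intro j
    exact (hψderiv j (Y j)).comp_hasFDerivAt Y
      ((ContinuousLinearMap.proj j : (Fin n → ℝ) →L[ℝ] ℝ).hasFDerivAt)
  have hVd : HasFDerivAt V (fderiv ℝ V X) X :=
    ((hV.differentiable (by simp)) X).hasFDerivAt
  have h1 : HasFDerivAt (fun Z : Fin n → ℝ => V (fun j => ψ j (Z j)))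
      ((fderiv ℝ V X).comp L) Y := hVd.comp Y hF
  -- log terms
  have h2k : ∀ k : Fin n, HasFDerivAt
      (fun Z : Fin n → ℝ => Real.log (D k (ψ k (Z k))))
      ((deriv (D k) (X k)) • (ContinuousLinearMap.proj k : (Fin n → ℝ) →L[ℝ] ℝ)) Y := by
    intro k
    have hDk : HasDerivAt (D k) (deriv (D k) (X k)) (X k) :=
      (((hD k).differentiable (by simp)) (X k)).hasDerivAt
    have hlog : HasDerivAt (fun x => Real.log (D k x))
        ((D k (X k))⁻¹ * deriv (D k) (X k)) (X k) :=
      (Real.hasDerivAt_log (hDpos k (X k)).ne').comp (X k) hDk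
    have hcomp : HasDerivAt (fun u => Real.log (D k (ψ k u)))
        (((D k (X k))⁻¹ * deriv (D k) (X k)) * D k (X k)) (Y k) :=
      hlog.comp (Y k) (hψderiv k (Y k))
    have heq : ((D k (X k))⁻¹ * deriv (D k) (X k)) * D k (X k) = deriv (D k) (X k) := by
      rw [mul_comm ((D k (X k))⁻¹) _, mul_assoc, inv_mul_cancel₀ (hDpos k (X k)).ne', mul_one]
    rw [heq] at hcomp
    exact hcomp.comp_hasFDerivAt Y
      ((ContinuousLinearMap.proj k : (Fin n → ℝ) →L[ℝ] ℝ).hasFDerivAt)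
  have h2 : HasFDerivAt (fun Z : Fin n → ℝ => ∑ k, Real.log (D k (ψ k (Z k))))
      (∑ k, (deriv (D k) (X k)) • (ContinuousLinearMap.proj k : (Fin n → ℝ) →L[ℝ] ℝ)) Y :=
    HasFDerivAt.fun_sum (fun k _ => h2k k)
  have h3 : HasFDerivAt Vhat
      ((fderiv ℝ V X).comp L - kT • (∑ k, (deriv (D k) (X k)) •
        (ContinuousLinearMap.proj k : (Fin n → ℝ) →L[ℝ] ℝ))) Y := by
    have h := h1.sub (h2.const_mul kT)
    have hfe : Vhat = fun Z : Fin n → ℝ => V (fun j => ψ j (Z j))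
        - kT * ∑ k, Real.log (D k (ψ k (Z k))) := funext hVhat
    rw [hfe]
    exact h
  rw [h3.fderiv]
  have hLapp : L (Pi.single i 1) = D i (X i) • (Pi.single i 1 : Fin n → ℝ) := by
    funext j
    rw [hL]
    simp only [ContinuousLinearMap.pi_apply, ContinuousLinearMap.smul_apply,
      ContinuousLinearMap.proj_apply, Pi.smul_apply, smul_eq_mul]
    rcases eq_or_ne j i with h | h
    · subst h; simp
    · simp [Pi.single_eq_of_ne h]
  have hsum : (∑ k, (deriv (D k) (X k)) •
      (ContinuousLinearMap.proj k : (Fin n → ℝ) →L[ℝ] ℝ)) (Pi.single i 1)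
      = deriv (D i) (X i) := by
    rw [ContinuousLinearMap.sum_apply]
    rw [Finset.sum_eq_single i]
    · simp
    · intro k _ hk
      simp only [ContinuousLinearMap.smul_apply, ContinuousLinearMap.proj_apply,
        Pi.single_eq_of_ne hk, smul_eq_mul, mul_zero]
    · intro h; exact absurd (Finset.mem_univ i) h
  simp only [ContinuousLinearMap.sub_apply, ContinuousLinearMap.smul_apply,
    ContinuousLinearMap.comp_apply, hLapp, hsum, map_smul, smul_eq_mul]
  rfl
end

section
/- Let V, D : ℝ → ℝ be smooth with D > 0, let D̃ : ℝ → ℝ be smooth and positive, kT > 0, and set g(x) = (D̃(x)/D(x))². Define V̂(x) = V(x) + kT·ln(g(x)) and D̂(x) = g(x)·D(x). Then D̂·D = D̃² pointwise, and the drift identity g(x)·(-D(x)V'(x) + kT D'(x)) = -D̂(x)V̂'(x) + kT D̂'(x) holds for all x. -/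
/-- Time rescaling with Jacobian `g = (D̃/D)²` transforms diffusion `D` to `D̂ = D̃²/D`
and satisfies the corresponding drift identity (Theorem A.4 specialized). -/
theorem time_rescaling_to_target_diffusion
    (V D Dtilde : ℝ → ℝ)
    (hV : ContDiff ℝ (⊤ : ℕ∞) V) (hD : ContDiff ℝ (⊤ : ℕ∞) D) (hDt : ContDiff ℝ (⊤ : ℕ∞) Dtilde)
    (hDpos : ∀ x, 0 < D x) (hDtpos : ∀ x, 0 < Dtilde x)
    (kT : ℝ) (hkT : 0 < kT)
    (g Vhat Dhat : ℝ → ℝ)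
    (hg : ∀ x, g x = (Dtilde x / D x) ^ 2)
    (hVhat : ∀ x, Vhat x = V x + kT * Real.log (g x))
    (hDhat : ∀ x, Dhat x = g x * D x) :
    (∀ x, Dhat x * D x = (Dtilde x) ^ 2) ∧
    (∀ x, g x * (-D x * deriv V x + kT * deriv D x)
        = -Dhat x * deriv Vhat x + kT * deriv Dhat x) := by
  have hgpos : ∀ x, 0 < g x := by
    intro x; rw [hg x]; exact pow_pos (div_pos (hDtpos x) (hDpos x)) 2
  have hgd : Differentiable ℝ g := by
    have : g = fun x => (Dtilde x / D x) ^ 2 := funext hg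
    rw [this]
    exact (((hDt.differentiable (by simp)).div (hD.differentiable (by simp))
      (fun x => (hDpos x).ne')).pow 2)
  have hVd : Differentiable ℝ V := hV.differentiable (by simp)
  have hDd : Differentiable ℝ D := hD.differentiable (by simp)
  constructor
  · intro x
    rw [hDhat x, hg x]
    have := (hDpos x).ne'
    field_simp
  · intro x
    have hDhd : HasDerivAt Dhat (deriv g x * D x + g x * deriv D x) x := by
      have : HasDerivAt (fun y => g y * D y) (deriv g x * D x + g x * deriv D x) x :=
        (hgd x).hasDerivAt.mul (hDd x).hasDerivAt
      exact this.congr_of_eventuallyEq (Filter.Eventually.of_forall fun y => (hDhat y))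
    have hVhd : HasDerivAt Vhat (deriv V x + kT * (deriv g x / g x)) x := by
      have hlog : HasDerivAt (fun y => Real.log (g y)) (deriv g x / g x) x :=
        (hgd x).hasDerivAt.log (hgpos x).ne'
      have : HasDerivAt (fun y => V y + kT * Real.log (g y))
          (deriv V x + kT * (deriv g x / g x)) x :=
        (hVd x).hasDerivAt.add (hlog.const_mul kT)
      exact this.congr_of_eventuallyEq (Filter.Eventually.of_forall fun y => (hVhat y))
    rw [hVhd.deriv, hDhd.deriv, hDhat x]
    have hgne := (hgpos x).ne'
    field_simp
    ring
end
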